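/- arXiv:math/9907075 — 2 statements merged into one kernel-verified Lean document; each statement's English description precedes it below -/
import Mathlib

section
/- Let R be a subring of a ring S and let D be the division closure of R in S. If D is a division ring, then D equals the rational closure of R in S. -/
open Matrix

section RatAux

variable {S : Type*} [Ring S] (R : Subring S)

/-- A pair of mutually inverse square matrices, the first having entries in `R`. -/
def IsRatPair {ι : Type} [Fintype ι] [DecidableEq ι] (M N : Matrix ι ι S) : Prop :=
  (∀ i j, M i j ∈ R) ∧ M * N = 1 ∧ N * M = 1

/-- The rational closure as a predicate (arbitrary finite index type). -/
def RatCl (t : S) : Prop :=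
  ∃ (ι : Type) (_ : Fintype ι) (_ : DecidableEq ι) (M N : Matrix ι ι S),
    IsRatPair R M N ∧ ∃ i j, N i j = t

variable {R}

theorem ratCl_of_pair {ι : Type} [Fintype ι] [DecidableEq ι] {M N : Matrix ι ι S}
    (h : IsRatPair R M N) (i j : ι) : RatCl R (N i j) :=
  ⟨ι, ‹_›, ‹_›, M, N, h, i, j, rfl⟩

theorem isRatPair_one {ι : Type} [Fintype ι] [DecidableEq ι] :
    IsRatPair R (1 : Matrix ι ι S) 1 := by
  refine ⟨fun i j => ?_, by simp, by simp⟩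
  rw [Matrix.one_apply]
  split
  · exact R.one_mem
  · exact R.zero_mem

theorem IsRatPair.block {ι κ : Type} [Fintype ι] [DecidableEq ι] [Fintype κ] [DecidableEq κ]
    {M N : Matrix ι ι S} {M' N' : Matrix κ κ S} (h : IsRatPair R M N) (h' : IsRatPair R M' N')
    (X : Matrix ι κ S) (hX : ∀ i j, X i j ∈ R) :
    IsRatPair R (fromBlocks M (-X) 0 M') (fromBlocks N (N * (X * N')) 0 N') := by
  obtain ⟨hM, hMN, hNM⟩ := h
  obtain ⟨hM', hMN', hNM'⟩ := h'
  refine ⟨?_, ?_, ?_⟩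
  · rintro (i | i) (j | j)
    · simpa using hM i j
    · simpa using R.neg_mem (hX i j)
    · simpa using R.zero_mem
    · simpa using hM' i j
  · rw [fromBlocks_multiply]
    have e12 : M * (N * (X * N')) + (-X) * N' = 0 := by
      rw [← Matrix.mul_assoc, hMN, Matrix.one_mul, Matrix.neg_mul]
      exact add_neg_cancel _
    rw [e12]
    simp [hMN, hMN', fromBlocks_one]
  · rw [fromBlocks_multiply]
    have e12 : N * (-X) + (N * (X * N')) * M' = 0 := by
      rw [Matrix.mul_assoc, Matrix.mul_assoc, hNM', Matrix.mul_one, Matrix.mul_neg]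
      exact neg_add_cancel _
    rw [e12]
    simp [hNM, hNM', fromBlocks_one]

theorem ratCl_zero : RatCl R (0 : S) := by
  have := ratCl_of_pair (isRatPair_one (R := R) (ι := Bool)) true false
  simpa [Matrix.one_apply] using this

theorem ratCl_one : RatCl R (1 : S) := by
  have := ratCl_of_pair (isRatPair_one (R := R) (ι := Bool)) true true
  simpa [Matrix.one_apply] using this

theorem ratCl_of_mem {r : S} (hr : r ∈ R) : RatCl R r := by
  have hp := (isRatPair_one (R := R) (ι := Unit)).block (isRatPair_one (ι := Unit))
    (Matrix.of fun _ _ => r) (fun _ _ => hr)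
  have := ratCl_of_pair hp (Sum.inl ()) (Sum.inr ())
  simpa using this

theorem ratCl_neg {t : S} (h : RatCl R t) : RatCl R (-t) := by
  obtain ⟨ι, _, _, M, N, ⟨hM, hMN, hNM⟩, i, j, rfl⟩ := h
  refine ⟨ι, ‹_›, ‹_›, -M, -N, ⟨fun i j => ?_, ?_, ?_⟩, i, j, ?_⟩
  · simpa using R.neg_mem (hM i j)
  · rw [Matrix.neg_mul, Matrix.mul_neg, neg_neg, hMN]
  · rw [Matrix.neg_mul, Matrix.mul_neg, neg_neg, hNM]
  · simp

theorem ratCl_mul {s t : S} (hs : RatCl R s) (ht : RatCl R t) : RatCl R (s * t) := by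
  obtain ⟨ι, _, _, M, N, hp, i, j, rfl⟩ := hs
  obtain ⟨κ, _, _, M', N', hp', k, l, rfl⟩ := ht
  set X : Matrix ι κ S := Matrix.of fun a b => if a = j ∧ b = k then (1 : S) else 0 with hXdef
  have hX : ∀ a b, X a b ∈ R := by
    intro a b
    simp only [hXdef, Matrix.of_apply]
    split
    · exact R.one_mem
    · exact R.zero_mem
  have hb := hp.block hp' X hX
  have := ratCl_of_pair hb (Sum.inl i) (Sum.inr l)
  have hval : (N * (X * N')) i l = N i j * N' k l := by
    have hXN' : X * N' = Matrix.of fun a b => if a = j then N' k b else 0 := by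
      ext a b
      simp only [Matrix.mul_apply, hXdef, Matrix.of_apply, ite_and]
      by_cases ha : a = j
      · simp [ha]
      · simp [ha]
    rw [hXN']
    simp [Matrix.mul_apply]
  rwa [Matrix.fromBlocks_apply₁₂, hval] at this

/-- bordered construction: `u ⬝ N ⬝ v` is in the rational closure for `u, v` over `R`. -/
theorem ratCl_border {ι : Type} [Fintype ι] [DecidableEq ι] {M N : Matrix ι ι S}
    (h : IsRatPair R M N) (u v : ι → S) (hu : ∀ i, u i ∈ R) (hv : ∀ i, v i ∈ R) :
    RatCl R (∑ i, ∑ j, u i * N i j * v j) := by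
  -- step 1: border on the left with the row u
  set X₁ : Matrix Unit ι S := Matrix.of fun _ i => u i with hX₁
  have h₁ := (isRatPair_one (R := R) (ι := Unit)).block h X₁ (fun _ i => hu i)
  -- step 2: border on the right with the column v
  set X₂ : Matrix (Unit ⊕ ι) Unit S :=
    Matrix.of fun p _ => Sum.elim (fun _ => (0 : S)) v p with hX₂
  have hX₂mem : ∀ p q, X₂ p q ∈ R := by
    rintro (p | p) q
    · simpa [hX₂] using R.zero_mem
    · simpa [hX₂] using hv p
  have h₂ := h₁.block (isRatPair_one (ι := Unit)) X₂ hX₂mem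
  have := ratCl_of_pair h₂ (Sum.inl (Sum.inl ())) (Sum.inr ())
  rw [Matrix.fromBlocks_apply₁₂, Matrix.mul_one, Matrix.one_mul] at this
  convert this using 2
  show (∑ i, ∑ j, u i * N i j * v j) = (fromBlocks (1 : Matrix Unit Unit S) (X₁ * N) (0 : Matrix ι Unit S) N * X₂) (Sum.inl ()) ()
  simp only [Matrix.mul_apply, Fintype.sum_sum_type, Matrix.fromBlocks_apply₁₁,
    Matrix.fromBlocks_apply₁₂, hX₂, Matrix.of_apply, Sum.elim_inl, Sum.elim_inr, mul_zero,
    Finset.sum_const_zero, zero_add, hX₁, Finset.sum_mul]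
  rw [Finset.sum_comm]

theorem ratCl_add {s t : S} (hs : RatCl R s) (ht : RatCl R t) : RatCl R (s + t) := by
  obtain ⟨ι, _, _, M, N, hp, i, j, rfl⟩ := hs
  obtain ⟨κ, _, _, M', N', hp', k, l, rfl⟩ := ht
  have hd := hp.block hp' 0 (fun _ _ => R.zero_mem)
  rw [show (fromBlocks M (-(0 : Matrix ι κ S)) 0 M') = fromBlocks M 0 0 M' by simp,
      show (fromBlocks N (N * ((0 : Matrix ι κ S) * N')) 0 N') = fromBlocks N 0 0 N' by simp]
      at hd
  set u : ι ⊕ κ → S := Sum.elim (fun a => if a = i then (1 : S) else 0)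
    (fun b => if b = k then (1 : S) else 0) with hu
  set v : ι ⊕ κ → S := Sum.elim (fun a => if a = j then (1 : S) else 0)
    (fun b => if b = l then (1 : S) else 0) with hv
  have humem : ∀ p, u p ∈ R := by
    rintro (p | p) <;> simp only [hu, Sum.elim_inl, Sum.elim_inr] <;> split <;>
      first | exact R.one_mem | exact R.zero_mem
  have hvmem : ∀ p, v p ∈ R := by
    rintro (p | p) <;> simp only [hv, Sum.elim_inl, Sum.elim_inr] <;> split <;>
      first | exact R.one_mem | exact R.zero_mem
  have := ratCl_border hd u v humem hvmem
  have hval : (∑ p, ∑ q, u p * (fromBlocks N 0 0 N') p q * v q) = N i j + N' k l := by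
    simp only [Fintype.sum_sum_type, hu, hv, Sum.elim_inl, Sum.elim_inr,
      Matrix.fromBlocks_apply₁₁, Matrix.fromBlocks_apply₁₂, Matrix.fromBlocks_apply₂₁,
      Matrix.fromBlocks_apply₂₂, ite_mul, one_mul, zero_mul, mul_ite, mul_one, mul_zero]
    simp [Finset.sum_ite_eq']
  rwa [hval] at this

theorem ratCl_inv {t y : S} (h : RatCl R t) (hty : t * y = 1) (hyt : y * t = 1) : RatCl R y := by
  obtain ⟨ι, _, _, M, N, ⟨hM, hMN, hNM⟩, i, j, rfl⟩ := h
  set B : Matrix ι Unit S := Matrix.of fun p _ => if p = j then (-1 : S) else 0 with hB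
  set C : Matrix Unit ι S := Matrix.of fun _ p => if p = i then (1 : S) else 0 with hC
  set Y : Matrix Unit Unit S := Matrix.of fun _ _ => y with hY
  have hCNB : C * (N * B) = Matrix.of fun _ _ => -(N i j) := by
    ext _ _
    simp only [Matrix.mul_apply, hB, hC, Matrix.of_apply, ite_mul, one_mul, zero_mul,
      Finset.sum_ite_eq', Finset.mem_univ, if_true]
    simp [Finset.sum_ite_eq' , mul_ite]
  have hty' : (C * (N * B)) * Y = -1 := by
    ext _ _
    simp [hCNB, hY, Matrix.mul_apply, Matrix.one_apply, hty]
  have hyt' : Y * (C * (N * B)) = -1 := by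
    ext _ _
    simp [hCNB, hY, Matrix.mul_apply, Matrix.one_apply, hyt]
  set P : Matrix (ι ⊕ Unit) (ι ⊕ Unit) S := fromBlocks M B C 0 with hP
  set P' : Matrix (ι ⊕ Unit) (ι ⊕ Unit) S :=
    fromBlocks (N + N * (B * (Y * (C * N)))) (-(N * (B * Y))) (-(Y * (C * N))) Y with hP'
  have hPmem : ∀ p q, P p q ∈ R := by
    rintro (p | p) (q | q)
    · simpa [hP] using hM p q
    · simp only [hP, Matrix.fromBlocks_apply₁₂, hB, Matrix.of_apply]
      split
      · exact R.neg_mem R.one_mem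
      · exact R.zero_mem
    · simp only [hP, Matrix.fromBlocks_apply₂₁, hC, Matrix.of_apply]
      split
      · exact R.one_mem
      · exact R.zero_mem
    · simpa [hP] using R.zero_mem
  have hPP' : P * P' = 1 := by
    rw [hP, hP', fromBlocks_multiply, ← fromBlocks_one, fromBlocks_inj]
    refine ⟨?_, ?_, ?_, ?_⟩
    · rw [Matrix.mul_add, hMN, ← Matrix.mul_assoc M N, hMN, Matrix.one_mul, Matrix.mul_neg]
      abel
    · rw [Matrix.mul_neg, ← Matrix.mul_assoc M N, hMN, Matrix.one_mul]
      exact neg_add_cancel _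
    · have h2 : C * (N * (B * (Y * (C * N)))) = -(C * N) := by
        rw [← Matrix.mul_assoc N B, ← Matrix.mul_assoc C (N * B),
          ← Matrix.mul_assoc (C * (N * B)) Y, hty', Matrix.neg_mul, Matrix.one_mul]
      rw [Matrix.mul_add, h2, Matrix.zero_mul]
      abel
    · rw [Matrix.mul_neg, ← Matrix.mul_assoc N B, ← Matrix.mul_assoc C (N * B), hty',
        Matrix.zero_mul, neg_neg, add_zero]
  have hP'P : P' * P = 1 := by
    rw [hP, hP', fromBlocks_multiply, ← fromBlocks_one, fromBlocks_inj]
    refine ⟨?_, ?_, ?_, ?_⟩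
    · have h1 : (N * (B * (Y * (C * N)))) * M = N * (B * (Y * C)) := by
        simp only [Matrix.mul_assoc]
        rw [hNM, Matrix.mul_one]
      have h2 : (N * (B * Y)) * C = N * (B * (Y * C)) := by
        simp only [Matrix.mul_assoc]
      rw [Matrix.add_mul, hNM, h1, Matrix.neg_mul, h2]
      abel
    · have h1 : (N * (B * (Y * (C * N)))) * B = -(N * B) := by
        simp only [Matrix.mul_assoc]
        rw [hyt', Matrix.mul_neg, Matrix.mul_neg, Matrix.mul_one]
      rw [Matrix.add_mul, h1, Matrix.mul_zero]
      abel
    · have h1 : (Y * (C * N)) * M = Y * C := by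
        simp only [Matrix.mul_assoc]
        rw [hNM, Matrix.mul_one]
      rw [Matrix.neg_mul, h1]
      exact neg_add_cancel _
    · have h1 : (Y * (C * N)) * B = -1 := by
        simp only [Matrix.mul_assoc]
        exact hyt'
      rw [Matrix.neg_mul, h1, Matrix.mul_zero, neg_neg, add_zero]
  have := ratCl_of_pair ⟨hPmem, hPP', hP'P⟩ (Sum.inr ()) (Sum.inr ())
  rw [hP'] at this
  simpa [hY] using this

/-- The rational closure as a subring. -/
def ratClSubring : Subring S where
  carrier := {t | RatCl R t}
  zero_mem' := ratCl_zero
  one_mem' := ratCl_one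
  add_mem' := ratCl_add
  mul_mem' := ratCl_mul
  neg_mem' := ratCl_neg

theorem ratCl_iff_fin {t : S} :
    RatCl R t ↔ ∃ (n : ℕ) (M N : Matrix (Fin n) (Fin n) S),
      (∀ i j, M i j ∈ R) ∧ M * N = 1 ∧ N * M = 1 ∧ ∃ i j, N i j = t := by
  constructor
  · rintro ⟨ι, _, _, M, N, ⟨hM, hMN, hNM⟩, i, j, rfl⟩
    classical
    let e := Fintype.equivFin ι
    refine ⟨Fintype.card ι, M.submatrix e.symm e.symm, N.submatrix e.symm e.symm,
      fun i j => hM _ _, ?_, ?_, e i, e j, by simp⟩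
    · rw [Matrix.submatrix_mul_equiv, hMN, Matrix.submatrix_one_equiv]
    · rw [Matrix.submatrix_mul_equiv, hNM, Matrix.submatrix_one_equiv]
  · rintro ⟨n, M, N, hM, hMN, hNM, i, j, rfl⟩
    exact ⟨Fin n, inferInstance, inferInstance, M, N, ⟨hM, hMN, hNM⟩, i, j, rfl⟩

end RatAux

/-- A subring `T` of `S` is division closed if whenever an element of `T` is invertible
in `S`, its inverse lies in `T`. -/
def DivisionClosed {S : Type*} [Ring S] (T : Subring S) : Prop :=
  ∀ d ∈ T, ∀ y : S, d * y = 1 → y * d = 1 → y ∈ T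

/-- The division closure of `R` in `S`: the smallest division-closed subring of `S`
containing `R`. -/
def divisionClosure {S : Type*} [Ring S] (R : Subring S) : Subring S :=
  sInf {T : Subring S | R ≤ T ∧ DivisionClosed T}


section Back

variable {S : Type*} [Ring S]

theorem inv_entries_mem [Nontrivial S] (R : Subring S)
    (hD : ∀ x ∈ divisionClosure R, x ≠ 0 → ∃ y ∈ divisionClosure R, x * y = 1 ∧ y * x = 1)
    {n : ℕ} (M N : Matrix (Fin n) (Fin n) S) (hM : ∀ i j, M i j ∈ divisionClosure R)
    (hMN : M * N = 1) (hNM : N * M = 1) : ∀ i j, N i j ∈ divisionClosure R := by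
  set D := divisionClosure R with hDdef
  letI : Nontrivial D := ⟨⟨0, 1, fun h => zero_ne_one (α := S) (congrArg Subtype.val h)⟩⟩
  letI : DivisionRing D := DivisionRing.ofIsUnitOrEqZero (fun a => by
    by_cases ha : (a : S) = 0
    · exact Or.inr (Subtype.ext ha)
    · obtain ⟨y, hy, h1, h2⟩ := hD a a.2 ha
      exact Or.inl ⟨⟨a, ⟨y, hy⟩, Subtype.ext h1, Subtype.ext h2⟩, rfl⟩)
  set M' : Matrix (Fin n) (Fin n) D := fun i j => ⟨M i j, hM i j⟩ with hM'
  let f : (Fin n → D) →ₗ[D] (Fin n → D) :=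
    { toFun := fun v j => ∑ i, v i * M' i j
      map_add' := fun v w => by
        funext j
        simp [add_mul, Finset.sum_add_distrib]
      map_smul' := fun c v => by
        funext j
        simp [Finset.mul_sum, mul_assoc] }
  have hinj : Function.Injective f := by
    refine (injective_iff_map_eq_zero f).2 ?_
    intro v hv
    have hw : ∀ j, ∑ i, (v i : S) * M i j = 0 := by
      intro j
      have h0 : ((∑ i, v i * M' i j : D) : S) = 0 := by
        rw [show (∑ i, v i * M' i j) = 0 from congrFun hv j]
        rfl
      push_cast at h0
      simpa [hM'] using h0
    have hwM : (fun i => (v i : S)) ᵥ* M = 0 := by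
      funext j
      simpa [Matrix.vecMul, dotProduct] using hw j
    have hw0 : (fun i => (v i : S)) = 0 := by
      have h1 := congrArg (· ᵥ* N) hwM
      simpa [Matrix.vecMul_vecMul, hMN, Matrix.vecMul_one, Matrix.zero_vecMul] using h1
    funext i
    exact Subtype.ext (congrFun hw0 i)
  have hsurj : Function.Surjective f := LinearMap.injective_iff_surjective.1 hinj
  choose w hwf using fun k => hsurj (Pi.single k 1)
  have hN' : (Matrix.of fun k i => ((w k i : S) : S)) * M = 1 := by
    ext k j
    have h0 := congrArg (fun z : D => (z : S)) (congrFun (hwf k) j)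
    simp only [f, LinearMap.coe_mk, AddHom.coe_mk] at h0
    push_cast at h0
    simp only [hM', Pi.single_apply, apply_ite (fun z : D => (z : S))] at h0
    simp only [Matrix.mul_apply, Matrix.of_apply, Matrix.one_apply]
    rw [h0]
    simp [eq_comm]
  have hNeq : N = Matrix.of fun k i => ((w k i : S) : S) := by
    calc N = 1 * N := (Matrix.one_mul N).symm
      _ = ((Matrix.of fun k i => ((w k i : S) : S)) * M) * N := by rw [hN']
      _ = (Matrix.of fun k i => ((w k i : S) : S)) * (M * N) := Matrix.mul_assoc _ _ _
      _ = Matrix.of fun k i => ((w k i : S) : S) := by rw [hMN, Matrix.mul_one]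
  intro i j
  rw [hNeq]
  exact (w i j).2

end Back

/-- If the division closure `D` of `R` in `S` is a division ring, then `D` coincides with the
rational closure of `R` in `S`: the set of entries of inverses of matrices over `R` that are
invertible over `S`. -/
theorem divisionClosure_eq_rationalClosure {S : Type*} [Ring S] (R : Subring S)
    (hD : ∀ x ∈ divisionClosure R, x ≠ 0 → ∃ y ∈ divisionClosure R, x * y = 1 ∧ y * x = 1) :
    ∀ t : S,
      t ∈ divisionClosure R ↔
        ∃ (n : ℕ) (M N : Matrix (Fin n) (Fin n) S),
          (∀ i j, M i j ∈ R) ∧ M * N = 1 ∧ N * M = 1 ∧ ∃ i j, N i j = t := by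
  intro t
  have hRD : R ≤ divisionClosure R := le_sInf fun T hT => hT.1
  rcases subsingleton_or_nontrivial S with hS | hS
  · constructor
    · intro _
      refine ⟨1, 1, 1, fun i j => ?_, Subsingleton.elim _ _, Subsingleton.elim _ _, 0, 0,
        Subsingleton.elim _ _⟩
      rw [Subsingleton.elim ((1 : Matrix (Fin 1) (Fin 1) S) i j) (0 : S)]
      exact R.zero_mem
    · intro _
      rw [Subsingleton.elim t (0 : S)]
      exact (divisionClosure R).zero_mem
  · constructor
    · intro ht
      have hle : divisionClosure R ≤ ratClSubring (R := R) := by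
        apply sInf_le
        refine ⟨fun r hr => ratCl_of_mem hr, ?_⟩
        intro d hd y h1 h2
        exact ratCl_inv hd h1 h2
      exact ratCl_iff_fin.1 (hle ht)
    · rintro ⟨n, M, N, hM, hMN, hNM, i, j, rfl⟩
      exact inv_entries_mem R hD M N (fun i j => hRD (hM i j)) hMN hNM i j
end

section
/- Let H, K be Hilbert spaces, P : H → K unitary, and let a, s : H → H be bounded operators with s injective. Suppose there exist subspaces M₁, M₂ of finite codimension in H such that Pa − aP vanishes on M₁ and Ps − sP vanishes on M₂ (viewing P as acting wherever composition makes sense, i.e., H = K up to the identification by P). If u is the closed operator s⁻¹a with domain {x : ax ∈ sH}, then there is a subspace M of finite codimension in H such that Pu and uP agree on M (equal domains intersected with M and equal values there). -/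
/-!
Write `u = s⁻¹a`. The image `s M₂` has finite codimension in `s H`, so `N₁ ∩ s H ⊆ s M₂` for
some `N₁` of finite codimension in `H`; likewise `N₂ ∩ s H ⊆ s (P M₂)`. Take `M` to consist of
the `x ∈ M₁` with `a x ∈ N₁` and `P (a x) ∈ N₂`. If `s y = a x`, then `a x ∈ s M₂`, so `y ∈ M₂`
by injectivity of `s`, and there `P` commutes with `s`: `s (P y) = P (a x) = a (P x)`.
Conversely, if `s z = a (P x) = P (a x)`, then `z = P y` with `y ∈ M₂`, so `P (s y) = P (a x)`
and cancelling `P` gives `s y = a x`.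
-/

open Submodule LinearMap

namespace Submodule

theorem CoFG.comap {R M N : Type*} [Ring R] [IsNoetherianRing R] [AddCommGroup M] [Module R M]
    [AddCommGroup N] [Module R N] {S : Submodule R N} (hS : S.CoFG) (f : M →ₗ[R] N) :
    (S.comap f).CoFG := by
  rw [← ker_mkQ S, ← ker_comp]
  exact CoFG.ker _

theorem CoFG.map_equiv {R M N : Type*} [Ring R] [IsNoetherianRing R] [AddCommGroup M]
    [Module R M] [AddCommGroup N] [Module R N] {S : Submodule R M} (hS : S.CoFG)
    (e : M ≃ₗ[R] N) : (S.map (e : M →ₗ[R] N)).CoFG := by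
  rw [map_equiv_eq_comap_symm]
  exact hS.comap _

variable {K V W : Type*} [DivisionRing K] [AddCommGroup V] [Module K V]
  [AddCommGroup W] [Module K W]

theorem exists_cofg_inf_le_of_finiteDimensional_map_mkQ {S T : Submodule K W}
    (hT : FiniteDimensional K (T.map S.mkQ)) : ∃ N : Submodule K W, N.CoFG ∧ N ⊓ T ≤ S := by
  obtain ⟨C, hC⟩ := (T.map S.mkQ).exists_isCompl
  refine ⟨C.comap S.mkQ, (FG.cofg_of_isCompl hC (Module.Finite.iff_fg.mp hT)).comap _, ?_⟩
  rintro x ⟨hxC, hxT⟩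
  simpa using (mem_bot K).mp (hC.disjoint.le_bot ⟨mem_map_of_mem hxT, hxC⟩)

theorem exists_cofg_inf_range_le_map (f : V →ₗ[K] W) {M : Submodule K V} (hM : M.CoFG) :
    ∃ N : Submodule K W, N.CoFG ∧ N ⊓ range f ≤ M.map f := by
  apply exists_cofg_inf_le_of_finiteDimensional_map_mkQ
  -- the image of `range f` in `W ⧸ M.map f` is the range of the map induced on `V ⧸ M`
  rw [← range_mapQ M _ f (le_comap_map f M)]
  infer_instance

end Submodule

theorem exists_cofg_inv_comp_commute {K V : Type*} [DivisionRing K] [AddCommGroup V]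
    [Module K V] (P : V ≃ₗ[K] V) (a s : V →ₗ[K] V) (hs : Function.Injective s)
    {M₁ M₂ : Submodule K V} (hM₁ : M₁.CoFG) (hM₂ : M₂.CoFG)
    (h₁ : ∀ x ∈ M₁, P (a x) = a (P x)) (h₂ : ∀ x ∈ M₂, P (s x) = s (P x)) :
    ∃ M : Submodule K V, M.CoFG ∧ ∀ x ∈ M,
      (∀ y, s y = a x → s (P y) = a (P x)) ∧ ((∃ z, s z = a (P x)) → ∃ y, s y = a x) := by
  obtain ⟨N₁, hN₁, hN₁s⟩ := exists_cofg_inf_range_le_map s hM₂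
  obtain ⟨N₂, hN₂, hN₂s⟩ := exists_cofg_inf_range_le_map s (CoFG.map_equiv hM₂ P)
  refine ⟨M₁ ⊓ N₁.comap a ⊓ N₂.comap (P ∘ₗ a), (hM₁.inf (hN₁.comap a)).inf (hN₂.comap _), ?_⟩
  rintro x ⟨⟨hxM₁, hxN₁⟩, hxN₂⟩
  constructor
  · intro y hy
    obtain ⟨y', hy'M₂, hsy'⟩ := hN₁s ⟨hxN₁, y, hy⟩
    obtain rfl : y' = y := hs (hsy'.trans hy.symm)
    rw [← h₂ y' hy'M₂, hy, h₁ x hxM₁]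
  · rintro ⟨z, hz⟩
    have hPax : P (a x) ∈ N₂ ⊓ range s := ⟨hxN₂, z, hz.trans (h₁ x hxM₁).symm⟩
    obtain ⟨_, ⟨y, hyM₂, rfl⟩, hsPy⟩ := hN₂s hPax
    exact ⟨y, P.injective ((h₂ y hyM₂).trans hsPy)⟩

/-- Forward direction of Proposition 1.2 in abstract form.  Let `P` be a unitary operator on a
Hilbert space `H`, let `a, s` be bounded operators with `s` injective, and suppose `Pa − aP`
vanishes on a subspace `M₁` of finite codimension and `Ps − sP` vanishes on a subspace `M₂` of
finite codimension.  Let `u = s⁻¹a`, the operator with domain `{x | a x ∈ s H}` sending `x` to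
the unique `y` with `s y = a x`.  Then there is a subspace `M` of finite codimension on which
`Pu` and `uP` agree: for `x ∈ M` we have `x ∈ dom u ↔ P x ∈ dom u`, and the values agree. -/
theorem exists_finiteCodim_Pu_eq_uP
    {H : Type*} [NormedAddCommGroup H] [InnerProductSpace ℂ H] [CompleteSpace H]
    (P : H →L[ℂ] H) (hP : P ∈ unitary (H →L[ℂ] H))
    (a s : H →L[ℂ] H) (hs : Function.Injective s)
    (M₁ M₂ : Submodule ℂ H)
    (hM₁ : FiniteDimensional ℂ (H ⧸ M₁)) (hM₂ : FiniteDimensional ℂ (H ⧸ M₂))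
    (h₁ : ∀ x ∈ M₁, P (a x) = a (P x)) (h₂ : ∀ x ∈ M₂, P (s x) = s (P x)) :
    ∃ M : Submodule ℂ H, FiniteDimensional ℂ (H ⧸ M) ∧
      (∀ x ∈ M, ((∃ y : H, s y = a x) ↔ ∃ z : H, s z = a (P x))) ∧
      ∀ x ∈ M, ∀ y z : H, s y = a x → s z = a (P x) → P y = z := by
  obtain ⟨M, hM, hu⟩ := exists_cofg_inv_comp_commute
    (Unitary.linearIsometryEquiv ⟨P, hP⟩).toLinearEquiv a s hs hM₁ hM₂ h₁ h₂
  refine ⟨M, hM, fun x hx => ⟨fun ⟨y, hy⟩ => ⟨P y, (hu x hx).1 y hy⟩, (hu x hx).2⟩, ?_⟩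
  intro x hx y z hy hz
  exact hs (((hu x hx).1 y hy).trans hz.symm)
end
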